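/- If the metric of a Kenmotsu manifold of dimension 2n+1 is a gradient almost *-Ricci soliton, then the gradient of the scalar curvature satisfies Dr = -2(r + 2n(2n+1))ξ. -/

import Mathlib

/-- An abstract algebraic model of a `(2n+1)`-dimensional Kenmotsu manifold:
`C` plays the role of the ring of smooth functions on the manifold and vector
fields are modelled as `ℝ`-derivations of `C`.  A global orthonormal frame `e`
is included in order to express traces (Ricci tensor, scalar curvature). -/
structure KenmotsuManifold (n : ℕ) (C : Type*) [CommRing C] [Algebra ℝ C] where
  /-- the Riemannian metric -/
  g : Derivation ℝ C C → Derivation ℝ C C → C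
  /-- the structure `(1,1)`-tensor field -/
  φ : Derivation ℝ C C → Derivation ℝ C C
  /-- the Reeb (characteristic) vector field -/
  ξ : Derivation ℝ C C
  /-- the contact `1`-form -/
  η : Derivation ℝ C C → C
  /-- the Levi-Civita connection -/
  nabla : Derivation ℝ C C → Derivation ℝ C C → Derivation ℝ C C
  /-- a global orthonormal frame, used to take traces -/
  e : Fin (2 * n + 1) → Derivation ℝ C C
  g_symm : ∀ X Y, g X Y = g Y X
  g_add_left : ∀ X Y Z, g (X + Y) Z = g X Z + g Y Z
  g_smul_left : ∀ (f : C) (X Y), g (f • X) Y = f * g X Y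
  g_nondeg : ∀ X, (∀ Y, g X Y = 0) → X = 0
  g_frame : ∀ i j, g (e i) (e j) = if i = j then 1 else 0
  frame_span : ∀ X : Derivation ℝ C C, X = ∑ i, g X (e i) • e i
  phi_phi : ∀ X, φ (φ X) = -X + η X • ξ
  phi_linear : ∀ (f : C) (X Y), φ (f • X + Y) = f • φ X + φ Y
  eta_xi : η ξ = 1
  eta_def : ∀ X, η X = g X ξ
  compat_phi : ∀ X Y, g (φ X) (φ Y) = g X Y - η X * η Y
  nabla_add_left : ∀ X Y Z, nabla (X + Y) Z = nabla X Z + nabla Y Z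
  nabla_smul_left : ∀ (f : C) (X Y), nabla (f • X) Y = f • nabla X Y
  nabla_add_right : ∀ X Y Z, nabla X (Y + Z) = nabla X Y + nabla X Z
  nabla_leibniz : ∀ (X) (f : C) (Y), nabla X (f • Y) = X f • Y + f • nabla X Y
  torsion_free : ∀ X Y, nabla X Y - nabla Y X = ⁅X, Y⁆
  metric_compat : ∀ X Y Z, X (g Y Z) = g (nabla X Y) Z + g Y (nabla X Z)
  /-- the Kenmotsu condition `(∇_X φ)Y = g(φX,Y)ξ - η(Y)φX` -/
  kenmotsu : ∀ X Y, nabla X (φ Y) - φ (nabla X Y) = g (φ X) Y • ξ - η Y • φ X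

namespace KenmotsuManifold

variable {n : ℕ} {C : Type*} [CommRing C] [Algebra ℝ C] (K : KenmotsuManifold n C)

/-- the Riemann curvature tensor `R(X,Y)Z = ∇_X∇_Y Z - ∇_Y∇_X Z - ∇_{[X,Y]}Z` -/
def Rm (X Y Z : Derivation ℝ C C) : Derivation ℝ C C :=
  K.nabla X (K.nabla Y Z) - K.nabla Y (K.nabla X Z) - K.nabla ⁅X, Y⁆ Z

/-- the Ricci tensor `S(X,Y) = trace (Z ↦ R(Z,X)Y)` -/
def S (X Y : Derivation ℝ C C) : C := ∑ i, K.g (K.Rm (K.e i) X Y) (K.e i)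

/-- the Ricci operator `Q`, `g(QX,Y) = S(X,Y)` -/
def Q (X : Derivation ℝ C C) : Derivation ℝ C C := ∑ i, K.S X (K.e i) • K.e i

/-- the scalar curvature `r` -/
def r : C := ∑ i, K.S (K.e i) (K.e i)

/-- the `*`-Ricci tensor `S*(X,Y) = (1/2) trace (Z ↦ R(X,φY)φZ)` -/
noncomputable def Sstar (X Y : Derivation ℝ C C) : C :=
  (2 : ℝ)⁻¹ • ∑ i, K.g (K.Rm X (K.φ Y) (K.φ (K.e i))) (K.e i)

/-- the covariant derivative `(∇_X Q)Y` of the Ricci operator -/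
def nablaQ (X Y : Derivation ℝ C C) : Derivation ℝ C C :=
  K.nabla X (K.Q Y) - K.Q (K.nabla X Y)

/-- the Lie derivative `(£_V g)(X,Y)` of the metric -/
def lieG (V X Y : Derivation ℝ C C) : C :=
  V (K.g X Y) - K.g ⁅V, X⁆ Y - K.g X ⁅V, Y⁆

/-- the Lie derivative `(£_V S)(X,Y)` of the Ricci tensor -/
def lieS (V X Y : Derivation ℝ C C) : C :=
  V (K.S X Y) - K.S ⁅V, X⁆ Y - K.S X ⁅V, Y⁆

/-- `g` is a `*`-Ricci soliton with potential vector field `V` and soliton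
constant `l`: `£_V g + 2S* + 2l g = 0`. -/
def IsStarRicciSoliton (V : Derivation ℝ C C) (l : ℝ) : Prop :=
  ∀ X Y, K.lieG V X Y + 2 * K.Sstar X Y + (2 * l) • K.g X Y = 0

/-- `g` is a gradient almost `*`-Ricci soliton with potential function `f`
(with gradient `F`, i.e. `g(F,X) = Xf`) and soliton function `l`:
`Hess f + S* + l g = 0`. -/
def IsGradAlmostStarRicciSoliton (f : C) (F : Derivation ℝ C C) (l : C) : Prop :=
  (∀ X, K.g F X = X f) ∧ ∀ X Y, K.g (K.nabla X F) Y + K.Sstar X Y + l * K.g X Y = 0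

/-- `M` is `η`-Einstein: `S = α g + β η⊗η`. -/
def IsEtaEinstein : Prop :=
  ∃ α β : C, ∀ X Y, K.S X Y = α * K.g X Y + β * (K.η X * K.η Y)

end KenmotsuManifold


namespace KenmotsuManifold

variable {n : ℕ} {C : Type*} [CommRing C] [Algebra ℝ C] (K : KenmotsuManifold n C)

local notation "𝒟" => Derivation ℝ C C




section Infra

/-- abbreviation for the type of vector fields -/

-- scalar cancellation helpers
lemma rcancel {c : ℝ} (hc : c ≠ 0) {x y : C} (h : algebraMap ℝ C c * x = algebraMap ℝ C c * y) :
    x = y := by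
  have := congrArg (fun z => algebraMap ℝ C c⁻¹ * z) h
  simpa [← mul_assoc, ← map_mul, inv_mul_cancel₀ hc] using this

lemma half {x : C} (h : x + x = 0) : x = 0 := by
  have h2 : algebraMap ℝ C 2 * x = algebraMap ℝ C 2 * 0 := by
    rw [show ((2:ℝ)) = (1:ℝ)+1 by norm_num, map_add, map_one, mul_zero]
    linear_combination h
  exact rcancel (by norm_num) h2

lemma twocancel {x y : C} (h : x + x = y + y) : x = y := by
  have : (x - y) + (x - y) = 0 := by linear_combination h
  have := half this; linear_combination this

-- sums of derivations applied to an element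
lemma dsum_apply {ι : Type*} (s : Finset ι) (D : ι → 𝒟) (c : C) :
    (∑ i ∈ s, D i) c = ∑ i ∈ s, D i c := by
  induction s using Finset.cons_induction with
  | empty => simp
  | cons a t h ih => simp [Finset.sum_cons, ih]

-- g bilinearity
lemma g_smul_right (f : C) (X Y : 𝒟) : K.g X (f • Y) = f * K.g X Y := by
  rw [K.g_symm, K.g_smul_left, K.g_symm]

lemma g_add_right (X Y Z : 𝒟) : K.g X (Y + Z) = K.g X Y + K.g X Z := by
  rw [K.g_symm, K.g_add_left, K.g_symm X Y, K.g_symm X Z]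

lemma g_zero_left (X : 𝒟) : K.g 0 X = 0 := by
  have := K.g_smul_left 0 0 X; simpa using this

lemma g_zero_right (X : 𝒟) : K.g X 0 = 0 := by rw [K.g_symm]; exact K.g_zero_left X

lemma g_neg_left (X Y : 𝒟) : K.g (-X) Y = -(K.g X Y) := by
  have := K.g_smul_left (-1) X Y; simpa using this

lemma g_neg_right (X Y : 𝒟) : K.g X (-Y) = -(K.g X Y) := by
  rw [K.g_symm, K.g_neg_left, K.g_symm]

lemma g_sub_left (X Y Z : 𝒟) : K.g (X - Y) Z = K.g X Z - K.g Y Z := by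
  rw [sub_eq_add_neg, K.g_add_left, K.g_neg_left]; ring

lemma g_sub_right (X Y Z : 𝒟) : K.g X (Y - Z) = K.g X Y - K.g X Z := by
  rw [K.g_symm, K.g_sub_left, K.g_symm Y X, K.g_symm Z X]

lemma g_sum_left {ι : Type*} (s : Finset ι) (v : ι → 𝒟) (Y : 𝒟) :
    K.g (∑ i ∈ s, v i) Y = ∑ i ∈ s, K.g (v i) Y := by
  induction s using Finset.cons_induction with
  | empty => simpa using K.g_zero_left Y
  | cons a t h ih => rw [Finset.sum_cons, K.g_add_left, ih, Finset.sum_cons]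

lemma g_sum_right {ι : Type*} (s : Finset ι) (v : ι → 𝒟) (Y : 𝒟) :
    K.g Y (∑ i ∈ s, v i) = ∑ i ∈ s, K.g Y (v i) := by
  rw [K.g_symm, K.g_sum_left]; exact Finset.sum_congr rfl fun i _ => K.g_symm _ _

-- eta linearity
lemma eta_add (X Y : 𝒟) : K.η (X + Y) = K.η X + K.η Y := by
  rw [K.eta_def, K.eta_def, K.eta_def, K.g_add_left]

lemma eta_smul (f : C) (X : 𝒟) : K.η (f • X) = f * K.η X := by
  rw [K.eta_def, K.eta_def, K.g_smul_left]

lemma eta_neg (X : 𝒟) : K.η (-X) = -K.η X := by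
  rw [K.eta_def, K.eta_def, K.g_neg_left]

lemma eta_sub (X Y : 𝒟) : K.η (X - Y) = K.η X - K.η Y := by
  rw [K.eta_def, K.eta_def, K.eta_def, K.g_sub_left]

lemma eta_zero : K.η 0 = 0 := by rw [K.eta_def]; exact K.g_zero_left _

-- nabla linearity extras
lemma nabla_zero_right (X : 𝒟) : K.nabla X 0 = 0 := by
  have := K.nabla_leibniz X 0 0; simpa using this

lemma nabla_zero_left (X : 𝒟) : K.nabla 0 X = 0 := by
  have := K.nabla_smul_left 0 0 X; simpa using this

lemma nabla_neg_right (X Y : 𝒟) : K.nabla X (-Y) = -K.nabla X Y := by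
  have h : (-Y) = (-1 : C) • Y := by module
  rw [h, K.nabla_leibniz]
  have : X (-1 : C) = 0 := by
    have : ((-1:C)) = algebraMap ℝ C (-1) := by simp
    rw [this, Derivation.map_algebraMap]
  rw [this]; module

lemma nabla_neg_left (X Y : 𝒟) : K.nabla (-X) Y = -K.nabla X Y := by
  have h : (-X) = (-1 : C) • X := by module
  rw [h, K.nabla_smul_left]; module

lemma nabla_sub_right (X Y Z : 𝒟) : K.nabla X (Y - Z) = K.nabla X Y - K.nabla X Z := by
  rw [sub_eq_add_neg, K.nabla_add_right, K.nabla_neg_right]; abel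

lemma nabla_sub_left (X Y Z : 𝒟) : K.nabla (X - Y) Z = K.nabla X Z - K.nabla Y Z := by
  rw [sub_eq_add_neg, K.nabla_add_left, K.nabla_neg_left]; abel

-- phi linearity
lemma phi_zero : K.φ 0 = 0 := by
  have := K.phi_linear 1 0 0; simpa using this

lemma phi_add (X Y : 𝒟) : K.φ (X + Y) = K.φ X + K.φ Y := by
  have := K.phi_linear 1 X Y; simpa using this

lemma phi_smul (f : C) (X : 𝒟) : K.φ (f • X) = f • K.φ X := by
  have := K.phi_linear f X 0; simpa [K.phi_zero] using this

lemma phi_neg (X : 𝒟) : K.φ (-X) = -K.φ X := by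
  have h : (-X) = (-1 : C) • X := by module
  rw [h, K.phi_smul]; module

lemma phi_sub (X Y : 𝒟) : K.φ (X - Y) = K.φ X - K.φ Y := by
  rw [sub_eq_add_neg, K.phi_add, K.phi_neg]; abel

lemma phi_sum {ι : Type*} (s : Finset ι) (v : ι → 𝒟) :
    K.φ (∑ i ∈ s, v i) = ∑ i ∈ s, K.φ (v i) := by
  induction s using Finset.cons_induction with
  | empty => simpa using K.phi_zero
  | cons a t h ih => rw [Finset.sum_cons, K.phi_add, ih, Finset.sum_cons]

-- bracket applied
lemma bracket_apply (X Y : 𝒟) (c : C) : ⁅X, Y⁆ c = X (Y c) - Y (X c) :=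
  Derivation.commutator_apply c

lemma bracket_smul_left (f : C) (X Y : 𝒟) :
    ⁅f • X, Y⁆ = f • ⁅X, Y⁆ - Y f • X := by
  ext c
  simp only [Derivation.commutator_apply, Derivation.sub_apply, Derivation.smul_apply,
    smul_eq_mul]
  rw [Derivation.leibniz]
  simp only [smul_eq_mul]; ring

lemma bracket_smul_right (f : C) (X Y : 𝒟) :
    ⁅X, f • Y⁆ = f • ⁅X, Y⁆ + X f • Y := by
  ext c
  simp only [Derivation.commutator_apply, Derivation.add_apply, Derivation.smul_apply,
    smul_eq_mul]
  rw [Derivation.leibniz]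
  simp only [smul_eq_mul]; ring

end Infra





/-- the "torsion scalar" `a = η(φξ)`; we eventually show it vanishes (for `n ≥ 1`). -/
def ta : C := K.η (K.φ K.ξ)

lemma g_xi_xi : K.g K.ξ K.ξ = 1 := by rw [← K.eta_def, K.eta_xi]

lemma g_eta (X : 𝒟) : K.g X K.ξ = K.η X := (K.eta_def X).symm

lemma g_eta' (X : 𝒟) : K.g K.ξ X = K.η X := by rw [K.g_symm]; exact K.g_eta X

lemma d_mul (X : 𝒟) (a b : C) : X (a * b) = a * X b + b * X a := by
  rw [Derivation.leibniz]; simp [smul_eq_mul]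

lemma eta_nabla_xi (X : 𝒟) : K.η (K.nabla X K.ξ) = 0 := by
  have h := K.metric_compat X K.ξ K.ξ
  rw [K.g_xi_xi] at h
  simp only [Derivation.map_one_eq_zero] at h
  rw [K.g_eta, K.g_symm, K.g_eta] at h
  exact half (by linear_combination -h)

lemma phi_phi_xi : K.φ (K.φ K.ξ) = 0 := by
  rw [K.phi_phi, K.eta_xi]; module

/-- skew-symmetry of `φ` with respect to `g`, with torsion corrections -/
lemma gphi_skew (X Y : 𝒟) :
    K.g (K.φ X) Y + K.g X (K.φ Y) = K.η Y * K.η (K.φ X) + K.η X * K.η (K.φ Y) := by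
  have h := K.compat_phi (K.φ X) Y
  rw [K.phi_phi X, K.g_add_left, K.g_neg_left, K.g_smul_left, K.g_eta' (K.φ Y)] at h
  linear_combination -h

lemma g_phi_xi (X : 𝒟) : K.g X (K.φ K.ξ) = K.ta * K.η X := by
  have h := K.compat_phi X (K.φ K.ξ)
  rw [K.phi_phi_xi, K.g_zero_right] at h
  rw [ta]; linear_combination -h

lemma phi_xi_eq : K.φ K.ξ = K.ta • K.ξ := by
  have h : ∀ Y, K.g (K.φ K.ξ - K.ta • K.ξ) Y = 0 := by
    intro Y
    rw [K.g_sub_left, K.g_smul_left, K.g_symm (K.φ K.ξ) Y, K.g_phi_xi, K.g_eta']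
    ring
  have := K.g_nondeg _ h
  have := sub_eq_zero.mp this
  exact this

lemma ta_sq : K.ta * K.ta = 0 := by
  have h := K.compat_phi K.ξ K.ξ
  rw [K.phi_xi_eq, K.g_smul_left, K.g_smul_right, K.g_xi_xi, K.eta_xi] at h
  linear_combination h

lemma ta_etaphi (X : 𝒟) : K.ta * K.η (K.φ X) = 0 := by
  have h := K.compat_phi X K.ξ
  rw [K.phi_xi_eq, K.g_smul_right, K.g_eta, K.g_eta, K.eta_xi] at h
  linear_combination h

lemma ta_da (X : 𝒟) : K.ta * X K.ta = 0 := by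
  have h : X (K.ta * K.ta) = 0 := by rw [K.ta_sq]; simp
  rw [d_mul] at h
  exact half (by linear_combination h)

lemma nabla_phi (X Y : 𝒟) :
    K.nabla X (K.φ Y) = K.φ (K.nabla X Y) + K.g (K.φ X) Y • K.ξ - K.η Y • K.φ X := by
  have h := K.kenmotsu X Y
  rw [sub_eq_iff_eq_add] at h
  rw [h]; abel

lemma hstar_xi (X : 𝒟) : K.φ (K.nabla X K.ξ) =
    X K.ta • K.ξ + K.ta • K.nabla X K.ξ - K.η (K.φ X) • K.ξ + K.φ X := by
  have h := K.nabla_phi X K.ξ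
  rw [K.phi_xi_eq, K.nabla_leibniz, K.g_eta, K.eta_xi, one_smul] at h
  rw [h]; abel

lemma nabla_xi (X : 𝒟) :
    K.nabla X K.ξ = X - K.η X • K.ξ - K.ta • K.φ X := by
  have hz1 : X K.ta * K.ta = 0 := by rw [mul_comm]; exact K.ta_da X
  have hz2 : K.ta * X K.ta = 0 := K.ta_da X
  have hz3 : K.ta * K.ta = 0 := K.ta_sq
  have hz4 : K.ta * K.η (K.φ X) = 0 := K.ta_etaphi X
  have hz5 : K.η (K.φ X) * K.ta = 0 := by rw [mul_comm]; exact K.ta_etaphi X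
  have h6 : -(K.nabla X K.ξ) = K.ta • K.φ X - X + K.η X • K.ξ := by
    calc -(K.nabla X K.ξ)
        = K.φ (K.φ (K.nabla X K.ξ)) := by
          rw [K.phi_phi, K.eta_nabla_xi, zero_smul, add_zero]
      _ = K.φ (X K.ta • K.ξ + K.ta • K.nabla X K.ξ - K.η (K.φ X) • K.ξ + K.φ X) := by
          rw [K.hstar_xi]
      _ = X K.ta • K.φ K.ξ + K.ta • K.φ (K.nabla X K.ξ) - K.η (K.φ X) • K.φ K.ξ
            + K.φ (K.φ X) := by
          rw [K.phi_add, K.phi_sub, K.phi_add, K.phi_smul, K.phi_smul, K.phi_smul]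
      _ = X K.ta • (K.ta • K.ξ)
            + K.ta • (X K.ta • K.ξ + K.ta • K.nabla X K.ξ - K.η (K.φ X) • K.ξ + K.φ X)
            - K.η (K.φ X) • (K.ta • K.ξ) + (-X + K.η X • K.ξ) := by
          rw [K.phi_xi_eq, K.hstar_xi, K.phi_phi]
      _ = (X K.ta * K.ta) • K.ξ + (K.ta * X K.ta) • K.ξ + (K.ta * K.ta) • K.nabla X K.ξ
            - (K.ta * K.η (K.φ X)) • K.ξ + K.ta • K.φ X - (K.η (K.φ X) * K.ta) • K.ξ
            - X + K.η X • K.ξ := by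
          module
      _ = K.ta • K.φ X - X + K.η X • K.ξ := by
          rw [hz1, hz2, hz3, hz4, hz5]; simp only [zero_smul]; abel
  apply neg_injective
  rw [h6]; module

lemma X_eta (X Y : 𝒟) : X (K.η Y) =
    K.η (K.nabla X Y) + K.g X Y - K.η X * K.η Y - K.ta * K.g (K.φ X) Y := by
  have h := K.metric_compat X Y K.ξ
  rw [K.nabla_xi, K.g_sub_right, K.g_sub_right, K.g_smul_right, K.g_smul_right,
    K.g_eta, K.g_eta] at h
  rw [K.g_symm Y X, K.g_symm Y (K.φ X)] at h
  linear_combination h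





lemma eta_phi_phi (X : 𝒟) : K.η (K.φ (K.φ X)) = 0 := by
  rw [K.phi_phi, K.eta_add, K.eta_neg, K.eta_smul, K.eta_xi]; ring

lemma dia (X Y : 𝒟) :
    X (K.η (K.φ Y)) - K.η (K.φ (K.nabla X Y)) + K.ta * K.g X Y - K.ta * (K.η X * K.η Y) = 0 := by
  have h1 := K.metric_compat X (K.φ Y) K.ξ
  rw [K.g_eta (K.φ Y), K.nabla_phi, K.g_sub_left, K.g_add_left,
    K.g_smul_left, K.g_smul_left, K.g_eta (K.φ (K.nabla X Y)), K.g_xi_xi,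
    K.g_eta (K.φ X), K.nabla_xi, K.g_sub_right, K.g_sub_right, K.g_smul_right,
    K.g_smul_right, K.g_eta (K.φ Y), K.compat_phi Y X, K.g_symm Y X] at h1
  have h4 := K.gphi_skew Y X
  rw [K.g_symm Y (K.φ X)] at h4
  linear_combination h1 + h4

lemma beta_eq (X : 𝒟) : K.η (K.φ X) = X K.ta + K.ta * K.η X := by
  have h := K.dia X K.ξ
  have h2 : K.η (K.φ (K.nabla X K.ξ)) = K.η (K.φ X) - K.η X * K.ta := by
    rw [K.nabla_xi, K.phi_sub, K.phi_sub, K.phi_smul, K.phi_smul, K.phi_xi_eq,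
      K.eta_sub, K.eta_sub, K.eta_smul, K.eta_smul, K.eta_smul, K.eta_xi, K.eta_phi_phi]
    ring
  rw [h2, K.g_eta, K.eta_xi] at h
  have : X (K.η (K.φ K.ξ)) = X K.ta := rfl
  rw [this] at h
  linear_combination -h

lemma club (X Y : 𝒟) :
    X (Y K.ta) - (K.nabla X Y) K.ta + X K.ta * K.η Y
      + 2 * (K.ta * K.g X Y) - 2 * (K.ta * (K.η X * K.η Y)) = 0 := by
  have hd := K.dia X Y
  have hX : X (K.η (K.φ Y)) = X (Y K.ta) + K.ta * X (K.η Y) + K.η Y * X K.ta := by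
    rw [K.beta_eq Y, map_add, d_mul]; ring
  have hXe := K.X_eta X Y
  have hbn := K.beta_eq (K.nabla X Y)
  linear_combination hd - hX + hbn - K.ta * hXe + K.g (K.φ X) Y * K.ta_sq

lemma da_eta (X Y : 𝒟) : X K.ta * K.η Y = Y K.ta * K.η X := by
  have ht : (K.nabla X Y) K.ta - (K.nabla Y X) K.ta = X (Y K.ta) - Y (X K.ta) := by
    have h := congrArg (fun (D : 𝒟) => D K.ta) (K.torsion_free X Y)
    simpa [bracket_apply] using h
  linear_combination K.club X Y - K.club Y X + ht - 2 * K.ta * K.g_symm X Y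

lemma da_eq (X : 𝒟) : X K.ta = K.η X * K.ξ K.ta := by
  have := K.da_eta X K.ξ
  rw [K.eta_xi, mul_one] at this
  linear_combination this

lemma d_xia (X : 𝒟) : X (K.ξ K.ta) = -(K.η X * K.ξ K.ta) := by
  have h := K.club X K.ξ
  have h2 : (K.nabla X K.ξ) K.ta = X K.ta - K.η X * K.ξ K.ta - K.ta * ((K.φ X) K.ta) := by
    rw [K.nabla_xi]
    simp only [Derivation.sub_apply, Derivation.smul_apply, smul_eq_mul]
  have h3 : (K.φ X) K.ta = K.η (K.φ X) * K.ξ K.ta := K.da_eq (K.φ X)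
  have h4 := K.ta_etaphi X
  have h5 := K.g_eta X
  rw [K.eta_xi] at h
  linear_combination h + h2 - K.ta * h3 - K.ξ K.ta * h4 - 2 * K.ta * h5

lemma core (X Y : 𝒟) :
    (K.ξ K.ta + 2 * K.ta) * (K.g X Y - K.η X * K.η Y) = 0 := by
  have hc := K.club X Y
  have h1 : X (Y K.ta) = K.η Y * X (K.ξ K.ta) + K.ξ K.ta * X (K.η Y) := by
    rw [K.da_eq Y]; exact d_mul X _ _
  have h2 := K.d_xia X
  have h3 := K.X_eta X Y
  have h4 := K.da_eq (K.nabla X Y)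
  have h5 := K.da_eq X
  have h6 := K.ta_da K.ξ
  linear_combination hc - h1 - K.ξ K.ta * h3 - K.η Y * h2 + h4 - K.η Y * h5
    + K.g (K.φ X) Y * h6

lemma g_expand (X Y : 𝒟) : K.g X Y = ∑ i, K.g X (K.e i) * K.g Y (K.e i) := by
  conv_lhs => rw [K.frame_span X]
  rw [K.g_sum_left]
  exact Finset.sum_congr rfl fun i _ => by rw [K.g_smul_left, K.g_symm (K.e i) Y]

lemma sum_ee : ∑ i, K.g (K.e i) (K.e i) = ((2 * n + 1 : ℕ) : C) := by
  simp [K.g_frame]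

lemma sum_eta2 : ∑ i, K.η (K.e i) * K.η (K.e i) = 1 := by
  have h := K.g_expand K.ξ K.ξ
  rw [K.g_xi_xi] at h
  rw [show (1:C) = ∑ i, K.g K.ξ (K.e i) * K.g K.ξ (K.e i) from h]
  exact Finset.sum_congr rfl fun i _ => by rw [K.g_eta' (K.e i)]

lemma xia_eq (hn : n ≠ 0) : K.ξ K.ta = -(2 * K.ta) := by
  have hs : (K.ξ K.ta + 2 * K.ta) * ((2 * n + 1 : ℕ) : C) - (K.ξ K.ta + 2 * K.ta) * 1 = 0 := by
    rw [← K.sum_ee, ← K.sum_eta2, Finset.mul_sum, Finset.mul_sum, ← Finset.sum_sub_distrib]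
    have : ∀ i ∈ Finset.univ, (K.ξ K.ta + 2 * K.ta) * K.g (K.e i) (K.e i)
        - (K.ξ K.ta + 2 * K.ta) * (K.η (K.e i) * K.η (K.e i)) = 0 := by
      intro i _
      linear_combination K.core (K.e i) (K.e i)
    rw [Finset.sum_congr rfl this]; simp
  have hcast : ((2 * n + 1 : ℕ) : C) - 1 = algebraMap ℝ C ((2 * n : ℕ) : ℝ) := by
    rw [map_natCast]; push_cast; ring
  have hz : algebraMap ℝ C ((2 * n : ℕ) : ℝ) * (K.ξ K.ta + 2 * K.ta)
      = algebraMap ℝ C ((2 * n : ℕ) : ℝ) * 0 := by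
    rw [mul_zero, ← hcast]; linear_combination hs
  have hne : ((2 * n : ℕ) : ℝ) ≠ 0 := by
    simp only [ne_eq, Nat.cast_eq_zero]; omega
  have := rcancel hne hz
  linear_combination this

lemma ta_zero (hn : n ≠ 0) : K.ta = 0 := by
  have e1 := K.d_xia K.ξ
  rw [K.eta_xi, one_mul] at e1
  have e2 : K.ξ (K.ξ K.ta) = K.ξ (-(2 * K.ta)) := congrArg (fun c => K.ξ c) (K.xia_eq hn)
  rw [Derivation.map_neg, d_mul] at e2
  have e3 : K.ξ ((2 : C)) = 0 := by
    have : ((2 : C)) = ((2 : ℕ) : C) := by norm_num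
    rw [this, Derivation.map_natCast]
  rw [e3] at e2
  have e4 := K.xia_eq hn
  -- e1 : ξξta = -ξta ; e2 : ξξta = -(2*ξta + ta*0) ; e4 : ξta = -(2ta)
  have h5 : K.ta + K.ta = 0 := by linear_combination e1 - e2 + e4
  exact half h5





section TaZero

lemma phi_xi0 (h0 : K.ta = 0) : K.φ K.ξ = 0 := by rw [K.phi_xi_eq, h0, zero_smul]

lemma eta_phi0 (h0 : K.ta = 0) (X : 𝒟) : K.η (K.φ X) = 0 := by
  rw [K.beta_eq, h0]; simp

lemma nabla_xi0 (h0 : K.ta = 0) (X : 𝒟) : K.nabla X K.ξ = X - K.η X • K.ξ := by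
  rw [K.nabla_xi, h0, zero_smul, sub_zero]

lemma X_eta0 (h0 : K.ta = 0) (X Y : 𝒟) :
    X (K.η Y) = K.η (K.nabla X Y) + K.g X Y - K.η X * K.η Y := by
  rw [K.X_eta, h0]; ring

lemma gphi_skew0 (h0 : K.ta = 0) (X Y : 𝒟) : K.g (K.φ X) Y = -(K.g X (K.φ Y)) := by
  have h := K.gphi_skew X Y
  rw [K.eta_phi0 h0, K.eta_phi0 h0] at h
  linear_combination h

lemma deta (h0 : K.ta = 0) (X Y : 𝒟) : X (K.η Y) - Y (K.η X) - K.η ⁅X, Y⁆ = 0 := by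
  have hx := K.X_eta0 h0 X Y
  have hy := K.X_eta0 h0 Y X
  have ht : K.η (K.nabla X Y) - K.η (K.nabla Y X) = K.η ⁅X, Y⁆ := by
    rw [← K.eta_sub, K.torsion_free]
  linear_combination hx - hy + ht + K.g_symm X Y

end TaZero

section Curvature

lemma Rm_skew1 (X Y Z : 𝒟) : K.Rm X Y Z = -K.Rm Y X Z := by
  unfold Rm
  rw [show ⁅X, Y⁆ = -⁅Y, X⁆ by rw [← lie_skew], K.nabla_neg_left]
  abel

lemma Rm_self (X Z : 𝒟) : K.Rm X X Z = 0 := by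
  unfold Rm
  rw [lie_self, K.nabla_zero_left]
  abel

lemma Rm_smul1 (f : C) (X Y Z : 𝒟) : K.Rm (f • X) Y Z = f • K.Rm X Y Z := by
  unfold Rm
  simp only [K.nabla_smul_left, bracket_smul_left, K.nabla_sub_left, K.nabla_leibniz]
  module

lemma Rm_smul2 (f : C) (X Y Z : 𝒟) : K.Rm X (f • Y) Z = f • K.Rm X Y Z := by
  rw [K.Rm_skew1, K.Rm_smul1, K.Rm_skew1 X Y]; module

lemma Rm_add1 (X X' Y Z : 𝒟) : K.Rm (X + X') Y Z = K.Rm X Y Z + K.Rm X' Y Z := by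
  unfold Rm
  simp only [K.nabla_add_left, add_lie, K.nabla_add_right]
  abel

lemma Rm_add2 (X Y Y' Z : 𝒟) : K.Rm X (Y + Y') Z = K.Rm X Y Z + K.Rm X Y' Z := by
  rw [K.Rm_skew1, K.Rm_add1, K.Rm_skew1 X Y, K.Rm_skew1 X Y']; abel

lemma Rm_smul3 (f : C) (X Y Z : 𝒟) : K.Rm X Y (f • Z) = f • K.Rm X Y Z := by
  unfold Rm
  simp only [K.nabla_leibniz, K.nabla_add_right, bracket_apply]
  module

lemma Rm_add3 (X Y Z Z' : 𝒟) : K.Rm X Y (Z + Z') = K.Rm X Y Z + K.Rm X Y Z' := by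
  unfold Rm
  rw [K.nabla_add_right, K.nabla_add_right, K.nabla_add_right, K.nabla_add_right,
    K.nabla_add_right]
  abel

lemma Rm_diag (X Y Z : 𝒟) : K.g (K.Rm X Y Z) Z = 0 := by
  have c1 := K.metric_compat X (K.nabla Y Z) Z
  have c2 := K.metric_compat Y (K.nabla X Z) Z
  have c3 := K.metric_compat ⁅X, Y⁆ Z Z
  have c4 := K.metric_compat X Z Z
  have c5 := K.metric_compat Y Z Z
  have d1 : X (Y (K.g Z Z)) = X (K.g (K.nabla Y Z) Z) + X (K.g Z (K.nabla Y Z)) := by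
    rw [c5, map_add]
  have d2 : Y (X (K.g Z Z)) = Y (K.g (K.nabla X Z) Z) + Y (K.g Z (K.nabla X Z)) := by
    rw [c4, map_add]
  have hb : ⁅X, Y⁆ (K.g Z Z) = X (Y (K.g Z Z)) - Y (X (K.g Z Z)) := bracket_apply X Y _
  have e1 : X (K.g Z (K.nabla Y Z)) = X (K.g (K.nabla Y Z) Z) :=
    congrArg (fun c => X c) (K.g_symm Z (K.nabla Y Z))
  have e2 : Y (K.g Z (K.nabla X Z)) = Y (K.g (K.nabla X Z) Z) :=
    congrArg (fun c => Y c) (K.g_symm Z (K.nabla X Z))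
  have s3 : K.g Z (K.nabla ⁅X, Y⁆ Z) = K.g (K.nabla ⁅X, Y⁆ Z) Z := K.g_symm _ _
  have s4 : K.g (K.nabla X Z) (K.nabla Y Z) = K.g (K.nabla Y Z) (K.nabla X Z) := K.g_symm _ _
  have big : K.g (K.Rm X Y Z) Z + K.g (K.Rm X Y Z) Z = 0 := by
    unfold Rm
    rw [K.g_sub_left, K.g_sub_left]
    linear_combination (-2 : ℤ) * c1 + 2 * c2 + 2 * s4 + c3 + s3 - hb - d1 - e1 + d2 + e2
  exact half big

lemma Rm_skew2 (X Y Z W : 𝒟) : K.g (K.Rm X Y Z) W + K.g (K.Rm X Y W) Z = 0 := by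
  have h := K.Rm_diag X Y (Z + W)
  rw [K.Rm_add3, K.g_add_left, K.g_add_right, K.g_add_right] at h
  linear_combination h - K.Rm_diag X Y Z - K.Rm_diag X Y W

lemma firstBianchi (X Y Z : 𝒟) : K.Rm X Y Z + K.Rm Y Z X + K.Rm Z X Y = 0 := by
  have j := lie_jacobi X Y Z
  simp only [← K.torsion_free] at j
  simp only [K.nabla_sub_left, K.nabla_sub_right] at j
  unfold Rm
  simp only [← K.torsion_free]
  simp only [K.nabla_sub_left, K.nabla_sub_right]
  rw [← j]; abel

end Curvature





lemma Rm_pair (X Y Z W : 𝒟) : K.g (K.Rm X Y Z) W = K.g (K.Rm Z W X) Y := by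
  have bi : ∀ A B Cc D : 𝒟,
      K.g (K.Rm A B Cc) D + K.g (K.Rm B Cc A) D + K.g (K.Rm Cc A B) D = 0 := by
    intro A B Cc D
    have h := congrArg (fun V => K.g V D) (K.firstBianchi A B Cc)
    simpa [K.g_add_left, K.g_zero_left] using h
  have er1 : ∀ A B Cc D : 𝒟, K.g (K.Rm A B Cc) D + K.g (K.Rm B A Cc) D = 0 := by
    intro A B Cc D; rw [K.Rm_skew1 A B, K.g_neg_left]; ring
  have big : (K.g (K.Rm X Y Z) W + K.g (K.Rm W Z X) Y)
      + (K.g (K.Rm X Y Z) W + K.g (K.Rm W Z X) Y) = 0 := by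
    linear_combination bi Y Z X W + bi Z X W Y + bi X W Y Z + bi W Y Z X
      - K.Rm_skew2 Y Z X W - K.Rm_skew2 Z X Y W - K.Rm_skew2 X W Z Y - K.Rm_skew2 W Y X Z
      + K.Rm_skew2 X Y W Z - er1 Y X W Z + K.Rm_skew2 W Z Y X - er1 Z W Y X
  have h2 := half big
  linear_combination h2 - er1 W Z X Y

lemma Sround (X Y : 𝒟) : ∑ i, K.g (K.Rm X (K.e i) (K.e i)) Y = K.S X Y := by
  unfold S
  refine Finset.sum_congr rfl fun i _ => ?_
  rw [K.Rm_skew1, K.g_neg_left]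
  linear_combination -K.Rm_skew2 (K.e i) X (K.e i) Y

lemma S_symm (X Y : 𝒟) : K.S X Y = K.S Y X := by
  unfold S
  rw [show ∑ i, K.g (K.Rm (K.e i) Y X) (K.e i) = K.S Y X from rfl, ← K.Sround Y X]
  exact Finset.sum_congr rfl fun i _ => K.Rm_pair _ X Y _

lemma S_add1 (X X' Y : 𝒟) : K.S (X + X') Y = K.S X Y + K.S X' Y := by
  unfold S
  rw [← Finset.sum_add_distrib]
  exact Finset.sum_congr rfl fun i _ => by rw [K.Rm_add2, K.g_add_left]

lemma S_smul1 (f : C) (X Y : 𝒟) : K.S (f • X) Y = f * K.S X Y := by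
  unfold S
  rw [Finset.mul_sum]
  exact Finset.sum_congr rfl fun i _ => by rw [K.Rm_smul2, K.g_smul_left]

lemma S_add2 (X Y Y' : 𝒟) : K.S X (Y + Y') = K.S X Y + K.S X Y' := by
  unfold S
  rw [← Finset.sum_add_distrib]
  exact Finset.sum_congr rfl fun i _ => by rw [K.Rm_add3, K.g_add_left]

lemma S_smul2 (f : C) (X Y : 𝒟) : K.S X (f • Y) = f * K.S X Y := by
  unfold S
  rw [Finset.mul_sum]
  exact Finset.sum_congr rfl fun i _ => by rw [K.Rm_smul3, K.g_smul_left]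

lemma S_sub2 (X Y Y' : 𝒟) : K.S X (Y - Y') = K.S X Y - K.S X Y' := by
  have h : Y - Y' = Y + (-1 : C) • Y' := by module
  rw [h, K.S_add2, K.S_smul2]; ring

lemma S_sub1 (X X' Y : 𝒟) : K.S (X - X') Y = K.S X Y - K.S X' Y := by
  have h : X - X' = X + (-1 : C) • X' := by module
  rw [h, K.S_add1, K.S_smul1]; ring

/-- covariant derivative of the Ricci tensor -/
def DS (W X Y : 𝒟) : C := W (K.S X Y) - K.S (K.nabla W X) Y - K.S X (K.nabla W Y)

/-- covariant derivative of the curvature tensor -/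
def nR (W X Y Z : 𝒟) : 𝒟 :=
  K.nabla W (K.Rm X Y Z) - K.Rm (K.nabla W X) Y Z - K.Rm X (K.nabla W Y) Z
    - K.Rm X Y (K.nabla W Z)

lemma DS_symm (W X Y : 𝒟) : K.DS W X Y = K.DS W Y X := by
  unfold DS
  rw [K.S_symm X Y, K.S_symm (K.nabla W X) Y, K.S_symm X (K.nabla W Y)]; ring

lemma secondBianchi (X Y Z V : 𝒟) :
    K.nR X Y Z V + K.nR Y Z X V + K.nR Z X Y V = 0 := by
  have j := lie_jacobi X Y Z
  simp only [← K.torsion_free] at j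
  simp only [K.nabla_sub_left, K.nabla_sub_right] at j
  have j2 := congrArg (fun D => K.nabla D V) j
  simp only [K.nabla_sub_left, K.nabla_add_left, K.nabla_zero_left] at j2
  unfold nR Rm
  simp only [← K.torsion_free]
  simp only [K.nabla_sub_left, K.nabla_sub_right]
  have j3 : -(0:Derivation ℝ C C) = 0 := neg_zero
  rw [← j3, ← j2]
  abel

lemma nR_skewAB (W X Y Z : 𝒟) : K.nR W X Y Z = -K.nR W Y X Z := by
  unfold nR
  rw [K.Rm_skew1 X Y Z, K.Rm_skew1 (K.nabla W X) Y Z, K.Rm_skew1 X (K.nabla W Y) Z,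
    K.Rm_skew1 X Y (K.nabla W Z), K.nabla_neg_right]
  abel

lemma nR_g_expand (W A B Cc D : 𝒟) : K.g (K.nR W A B Cc) D
    = W (K.g (K.Rm A B Cc) D) - K.g (K.Rm A B Cc) (K.nabla W D)
      - K.g (K.Rm (K.nabla W A) B Cc) D - K.g (K.Rm A (K.nabla W B) Cc) D
      - K.g (K.Rm A B (K.nabla W Cc)) D := by
  unfold nR
  rw [K.g_sub_left, K.g_sub_left, K.g_sub_left, K.metric_compat]
  ring

lemma nR_pair (W A B Cc D : 𝒟) : K.g (K.nR W A B Cc) D = K.g (K.nR W Cc D A) B := by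
  rw [K.nR_g_expand, K.nR_g_expand]
  have h0 := congrArg (fun c => W c) (K.Rm_pair A B Cc D)
  have h1 := K.Rm_pair A B Cc (K.nabla W D)
  have h2 := K.Rm_pair (K.nabla W A) B Cc D
  have h3 := K.Rm_pair A (K.nabla W B) Cc D
  have h4 := K.Rm_pair A B (K.nabla W Cc) D
  linear_combination h0 - h1 - h2 - h3 - h4




lemma gframe_anti (W : 𝒟) (i j : Fin (2 * n + 1)) :
    K.g (K.nabla W (K.e i)) (K.e j) + K.g (K.nabla W (K.e j)) (K.e i) = 0 := by
  have h := K.metric_compat W (K.e i) (K.e j)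
  have hc : W (K.g (K.e i) (K.e j)) = 0 := by
    rw [K.g_frame]; split_ifs <;> simp
  rw [hc] at h
  linear_combination -h - K.g_symm (K.e i) (K.nabla W (K.e j))

lemma bilin_sum_left (B : 𝒟 → 𝒟 → C)
    (hz : ∀ V, B 0 V = 0)
    (hl : ∀ (c : C) U V, B (c • U) V = c * B U V)
    (hal : ∀ U U' V, B (U + U') V = B U V + B U' V)
    {ι : Type*} (s : Finset ι) (c : ι → C) (v : ι → 𝒟) (V : 𝒟) :
    B (∑ j ∈ s, c j • v j) V = ∑ j ∈ s, c j * B (v j) V := by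
  induction s using Finset.cons_induction with
  | empty => simpa using hz V
  | cons a t h ih => rw [Finset.sum_cons, hal, hl, ih, Finset.sum_cons]

lemma bilin_sum_right (B : 𝒟 → 𝒟 → C)
    (hz : ∀ U, B U 0 = 0)
    (hr : ∀ (c : C) U V, B U (c • V) = c * B U V)
    (har : ∀ U V V', B U (V + V') = B U V + B U V')
    {ι : Type*} (s : Finset ι) (c : ι → C) (v : ι → 𝒟) (U : 𝒟) :
    B U (∑ j ∈ s, c j • v j) = ∑ j ∈ s, c j * B U (v j) := by
  induction s using Finset.cons_induction with
  | empty => simpa using hz U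
  | cons a t h ih => rw [Finset.sum_cons, har, hr, ih, Finset.sum_cons]

lemma frame_cancel (B : 𝒟 → 𝒟 → C)
    (hl : ∀ (c : C) U V, B (c • U) V = c * B U V)
    (hal : ∀ U U' V, B (U + U') V = B U V + B U' V)
    (hr : ∀ (c : C) U V, B U (c • V) = c * B U V)
    (har : ∀ U V V', B U (V + V') = B U V + B U V')
    (W : 𝒟) :
    ∑ i, (B (K.nabla W (K.e i)) (K.e i) + B (K.e i) (K.nabla W (K.e i))) = 0 := by
  have hz : ∀ V, B 0 V = 0 := fun V => by
    have := hl 0 0 V; simpa using this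
  have hz' : ∀ U, B U 0 = 0 := fun U => by
    have := hr 0 U 0; simpa using this
  have hexp : ∀ i, B (K.nabla W (K.e i)) (K.e i) + B (K.e i) (K.nabla W (K.e i))
      = ∑ j, (K.g (K.nabla W (K.e i)) (K.e j) * B (K.e j) (K.e i)
          + K.g (K.nabla W (K.e i)) (K.e j) * B (K.e i) (K.e j)) := by
    intro i
    rw [Finset.sum_add_distrib]
    congr 1
    · conv_lhs => rw [K.frame_span (K.nabla W (K.e i))]
      exact bilin_sum_left B hz hl hal Finset.univ _ _ _
    · conv_lhs => rw [K.frame_span (K.nabla W (K.e i))]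
      exact bilin_sum_right B hz' hr har Finset.univ _ _ _
  rw [Finset.sum_congr rfl fun i _ => hexp i]
  -- now a double sum; antisymmetrize
  set f : Fin (2*n+1) → Fin (2*n+1) → C := fun i j =>
    K.g (K.nabla W (K.e i)) (K.e j) * B (K.e j) (K.e i)
      + K.g (K.nabla W (K.e i)) (K.e j) * B (K.e i) (K.e j) with hf
  have hpt : ∀ i j, f i j = -f j i := by
    intro i j
    have h := K.gframe_anti W i j
    simp only [hf]
    linear_combination (B (K.e i) (K.e j) + B (K.e j) (K.e i)) * h
  have hsw : ∑ i, ∑ j, f j i = ∑ i, ∑ j, f i j := Finset.sum_comm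
  have key : (∑ i, ∑ j, f i j) + (∑ i, ∑ j, f i j) = 0 := by
    nth_rewrite 1 [show (∑ i, ∑ j, f i j) = ∑ i, ∑ j, -(f j i) from
      Finset.sum_congr rfl fun i _ => Finset.sum_congr rfl fun j _ => hpt i j]
    simp only [Finset.sum_neg_distrib]
    rw [hsw]
    simp
  exact half key

lemma nR_expandD (W X Y Z : 𝒟) : K.nabla W (K.Rm X Y Z)
    = K.nR W X Y Z + K.Rm (K.nabla W X) Y Z + K.Rm X (K.nabla W Y) Z
      + K.Rm X Y (K.nabla W Z) := by
  unfold nR; abel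

lemma DS_from_nR (W X Y : 𝒟) : K.DS W X Y = ∑ i, K.g (K.nR W (K.e i) X Y) (K.e i) := by
  have h1 : W (K.S X Y) = ∑ i, ((K.g (K.nR W (K.e i) X Y) (K.e i)
      + (K.g (K.Rm (K.nabla W (K.e i)) X Y) (K.e i)
         + K.g (K.Rm (K.e i) X Y) (K.nabla W (K.e i))))
      + (K.g (K.Rm (K.e i) (K.nabla W X) Y) (K.e i)
         + K.g (K.Rm (K.e i) X (K.nabla W Y)) (K.e i))) := by
    unfold S
    rw [map_sum]
    refine Finset.sum_congr rfl fun i _ => ?_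
    have hm := K.metric_compat W (K.Rm (K.e i) X Y) (K.e i)
    rw [K.nR_expandD, K.g_add_left, K.g_add_left, K.g_add_left] at hm
    linear_combination hm
  have h2 := K.frame_cancel (fun U V => K.g (K.Rm U X Y) V)
    (fun c U V => by show K.g (K.Rm (c • U) X Y) V = c * K.g (K.Rm U X Y) V
                     rw [K.Rm_smul1, K.g_smul_left])
    (fun U U' V => by show K.g (K.Rm (U + U') X Y) V = K.g (K.Rm U X Y) V + K.g (K.Rm U' X Y) V
                      rw [K.Rm_add1, K.g_add_left])
    (fun c U V => by show K.g (K.Rm U X Y) (c • V) = c * K.g (K.Rm U X Y) V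
                     rw [K.g_smul_right])
    (fun U V V' => by show K.g (K.Rm U X Y) (V + V') = K.g (K.Rm U X Y) V + K.g (K.Rm U X Y) V'
                      rw [K.g_add_right]) W
  unfold DS
  rw [h1, Finset.sum_add_distrib, Finset.sum_add_distrib, Finset.sum_add_distrib,
    Finset.sum_add_distrib]
  rw [Finset.sum_add_distrib] at h2
  have e3 : ∑ i, K.g (K.Rm (K.e i) (K.nabla W X) Y) (K.e i) = K.S (K.nabla W X) Y := rfl
  have e4 : ∑ i, K.g (K.Rm (K.e i) X (K.nabla W Y)) (K.e i) = K.S X (K.nabla W Y) := rfl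
  rw [e3, e4]
  linear_combination h2

lemma CB1 (X Y Z : 𝒟) :
    ∑ i, K.g (K.nR (K.e i) X Y Z) (K.e i) = K.DS X Y Z - K.DS Y X Z := by
  have hsb : ∀ i : Fin (2 * n + 1),
      K.g (K.nR (K.e i) X Y Z) (K.e i) = K.g (K.nR X (K.e i) Y Z) (K.e i)
        - K.g (K.nR Y (K.e i) X Z) (K.e i) := by
    intro i
    have h := congrArg (fun V => K.g V (K.e i)) (K.secondBianchi (K.e i) X Y Z)
    simp only [K.g_add_left, K.g_zero_left] at h
    have h2 : K.g (K.nR X Y (K.e i) Z) (K.e i) = -K.g (K.nR X (K.e i) Y Z) (K.e i) := by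
      rw [K.nR_skewAB X Y (K.e i) Z, K.g_neg_left]
    have h3 : K.g (K.nR Y (K.e i) X Z) (K.e i) = K.g (K.nR Y (K.e i) X Z) (K.e i) := rfl
    linear_combination h - h2
  rw [Finset.sum_congr rfl fun i _ => hsb i, Finset.sum_sub_distrib,
    ← K.DS_from_nR X Y Z, ← K.DS_from_nR Y X Z]

lemma sum_DS_diag (W : 𝒟) : ∑ i, K.DS W (K.e i) (K.e i) = W K.r := by
  have h2 := K.frame_cancel (fun U V => K.S U V)
    (fun c U V => by show K.S (c • U) V = c * K.S U V; rw [K.S_smul1])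
    (fun U U' V => by show K.S (U + U') V = K.S U V + K.S U' V; rw [K.S_add1])
    (fun c U V => by show K.S U (c • V) = c * K.S U V; rw [K.S_smul2])
    (fun U V V' => by show K.S U (V + V') = K.S U V + K.S U V'; rw [K.S_add2]) W
  unfold DS
  rw [Finset.sum_sub_distrib, Finset.sum_sub_distrib]
  unfold r
  rw [map_sum]
  have h3 : (∑ i, K.S (K.nabla W (K.e i)) (K.e i)) + ∑ i, K.S (K.e i) (K.nabla W (K.e i)) = 0 :=
    Finset.sum_add_distrib.symm.trans h2
  linear_combination -h3

lemma dr_two (Y : 𝒟) :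
    Y K.r = ∑ i, K.DS (K.e i) Y (K.e i) + ∑ i, K.DS (K.e i) Y (K.e i) := by
  have h1 : ∀ j : Fin (2 * n + 1), ∑ i, K.g (K.nR (K.e i) Y (K.e j) (K.e j)) (K.e i)
      = K.DS Y (K.e j) (K.e j) - K.DS (K.e j) Y (K.e j) := fun j => K.CB1 Y (K.e j) (K.e j)
  -- transform LHS using pair symmetry
  have h2 : ∀ i j, K.g (K.nR (K.e i) Y (K.e j) (K.e j)) (K.e i)
      = K.g (K.nR (K.e i) (K.e j) (K.e i) Y) (K.e j) := fun i j => K.nR_pair (K.e i) Y (K.e j) (K.e j) (K.e i)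
  have h3 : ∀ i, ∑ j, K.g (K.nR (K.e i) (K.e j) (K.e i) Y) (K.e j) = K.DS (K.e i) (K.e i) Y :=
    fun i => (K.DS_from_nR (K.e i) (K.e i) Y).symm
  have h4 : ∑ j, (K.DS Y (K.e j) (K.e j) - K.DS (K.e j) Y (K.e j))
      = ∑ i, K.DS (K.e i) (K.e i) Y := by
    rw [← Finset.sum_congr rfl fun j (_ : j ∈ Finset.univ) => h1 j]
    rw [Finset.sum_comm]
    refine Finset.sum_congr rfl fun i _ => ?_
    rw [← h3 i]
    exact Finset.sum_congr rfl fun j _ => h2 i j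
  rw [Finset.sum_sub_distrib, K.sum_DS_diag Y] at h4
  have h5 : ∀ i, K.DS (K.e i) (K.e i) Y = K.DS (K.e i) Y (K.e i) := fun i => K.DS_symm _ _ _
  rw [Finset.sum_congr rfl fun i _ => h5 i] at h4
  linear_combination h4
section KenCurv

variable (h0 : K.ta = 0)

lemma eta_bracket (X Y : 𝒟) : K.η ⁅X, Y⁆ = K.η (K.nabla X Y) - K.η (K.nabla Y X) := by
  rw [← K.eta_sub, K.torsion_free]

lemma Rm_xi (h0 : K.ta = 0) (X Y : 𝒟) :
    K.Rm X Y K.ξ = K.η X • Y - K.η Y • X := by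
  unfold Rm
  rw [K.nabla_xi0 h0 Y, K.nabla_xi0 h0 X, K.nabla_xi0 h0 ⁅X, Y⁆]
  rw [K.nabla_sub_right, K.nabla_leibniz, K.nabla_sub_right, K.nabla_leibniz]
  rw [K.nabla_xi0 h0 X, K.nabla_xi0 h0 Y]
  rw [K.X_eta0 h0 X Y, K.X_eta0 h0 Y X]
  rw [K.eta_bracket, ← K.torsion_free]
  have hs := K.g_symm X Y
  rw [hs]
  module

lemma eta_Rm (h0 : K.ta = 0) (X Y Z : 𝒟) :
    K.g (K.Rm X Y Z) K.ξ = K.η Y * K.g X Z - K.η X * K.g Y Z := by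
  have h := K.Rm_skew2 X Y Z K.ξ
  rw [K.Rm_xi h0, K.g_sub_left, K.g_smul_left, K.g_smul_left] at h
  linear_combination h

lemma Rm_xi1 (h0 : K.ta = 0) (X Y : 𝒟) :
    K.Rm K.ξ X Y = K.η Y • X - K.g X Y • K.ξ := by
  have h : ∀ W, K.g (K.Rm K.ξ X Y - (K.η Y • X - K.g X Y • K.ξ)) W = 0 := by
    intro W
    rw [K.g_sub_left, K.g_sub_left, K.g_smul_left, K.g_smul_left]
    have hp : K.g (K.Rm K.ξ X Y) W = K.g (K.Rm Y W K.ξ) X := K.Rm_pair K.ξ X Y W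
    rw [hp, K.Rm_xi h0, K.g_sub_left, K.g_smul_left, K.g_smul_left]
    rw [K.g_eta' W, K.g_symm W X, K.g_symm Y X]
    ring
  exact sub_eq_zero.mp (K.g_nondeg _ h)

lemma sum_eta_gx (X : 𝒟) : ∑ i, K.η (K.e i) * K.g X (K.e i) = K.η X := by
  have h := K.g_expand X K.ξ
  rw [K.g_eta] at h
  rw [show K.η X = ∑ i, K.g X (K.e i) * K.g K.ξ (K.e i) from h]
  exact Finset.sum_congr rfl fun i _ => by rw [K.g_eta' (K.e i)]; ring

lemma S_xi2 (h0 : K.ta = 0) (X : 𝒟) :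
    K.S K.ξ X = ((1 : C) - ((2 * n + 1 : ℕ) : C)) * K.η X := by
  rw [K.S_symm]
  unfold S
  have hterm : ∀ i : Fin (2 * n + 1), K.g (K.Rm (K.e i) X K.ξ) (K.e i)
      = K.η (K.e i) * K.g X (K.e i) - K.η X * K.g (K.e i) (K.e i) := by
    intro i
    rw [K.Rm_xi h0, K.g_sub_left, K.g_smul_left, K.g_smul_left]
  rw [Finset.sum_congr rfl fun i _ => hterm i, Finset.sum_sub_distrib,
    K.sum_eta_gx X, ← Finset.mul_sum, K.sum_ee]
  ring

lemma S_xi1 (h0 : K.ta = 0) (X : 𝒟) :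
    K.S X K.ξ = ((1 : C) - ((2 * n + 1 : ℕ) : C)) * K.η X := by
  rw [K.S_symm]; exact K.S_xi2 h0 X

lemma dconst (X : 𝒟) : X ((1 : C) - ((2 * n + 1 : ℕ) : C)) = 0 := by
  rw [Derivation.map_sub, Derivation.map_one_eq_zero, Derivation.map_natCast]
  ring

lemma divS_xi (h0 : K.ta = 0) :
    ∑ i, K.DS (K.e i) K.ξ (K.e i)
      = ((1 : C) - ((2 * n + 1 : ℕ) : C)) * ((2 * n + 1 : ℕ) : C) - K.r := by
  have hterm : ∀ j : Fin (2 * n + 1), K.DS (K.e j) K.ξ (K.e j)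
      = ((1 : C) - ((2 * n + 1 : ℕ) : C)) * K.g (K.e j) (K.e j) - K.S (K.e j) (K.e j) := by
    intro j
    unfold DS
    have d1 : (K.e j) (K.S K.ξ (K.e j))
        = ((1 : C) - ((2 * n + 1 : ℕ) : C)) * (K.e j) (K.η (K.e j)) := by
      rw [K.S_xi2 h0, d_mul, dconst]; ring
    have d2 := K.X_eta0 h0 (K.e j) (K.e j)
    have d3 : K.S (K.nabla (K.e j) K.ξ) (K.e j)
        = K.S (K.e j) (K.e j)
          - K.η (K.e j) * (((1 : C) - ((2 * n + 1 : ℕ) : C)) * K.η (K.e j)) := by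
      rw [K.nabla_xi0 h0, K.S_sub1, K.S_smul1, K.S_xi2 h0]
    have d4 := K.S_xi2 h0 (K.nabla (K.e j) (K.e j))
    rw [d1, d2, d3, d4]
    ring
  rw [Finset.sum_congr rfl fun j _ => hterm j, Finset.sum_sub_distrib,
    ← Finset.mul_sum, K.sum_ee]
  rfl

lemma xi_r (h0 : K.ta = 0) :
    K.ξ K.r = -(2 * (K.r + (((2 * n + 1 : ℕ) : C) - 1) * ((2 * n + 1 : ℕ) : C))) := by
  have h := K.dr_two K.ξ
  rw [K.divS_xi h0] at h
  linear_combination h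

end KenCurv
section PhiCurv

lemma X_gphi (X Y Z : 𝒟) :
    X (K.g (K.φ Y) Z) = K.g (K.φ (K.nabla X Y)) Z + K.η Z * K.g (K.φ X) Y
      - K.η Y * K.g (K.φ X) Z + K.g (K.φ Y) (K.nabla X Z) := by
  have h := K.metric_compat X (K.φ Y) Z
  rw [K.nabla_phi X Y, K.g_sub_left, K.g_add_left, K.g_smul_left, K.g_smul_left] at h
  rw [K.g_eta' Z] at h
  linear_combination h

lemma Rm_phi (h0 : K.ta = 0) (X Y Z : 𝒟) :
    K.Rm X Y (K.φ Z) = K.φ (K.Rm X Y Z) + K.g Y Z • K.φ X - K.g X Z • K.φ Y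
      + K.g (K.φ Y) Z • X - K.g (K.φ X) Z • Y := by
  unfold Rm
  rw [K.nabla_phi Y Z, K.nabla_phi X Z, K.nabla_phi ⁅X, Y⁆ Z]
  rw [K.nabla_sub_right, K.nabla_add_right, K.nabla_leibniz, K.nabla_leibniz,
      K.nabla_phi X (K.nabla Y Z), K.nabla_phi X Y, K.nabla_xi0 h0 X]
  rw [K.nabla_sub_right, K.nabla_add_right, K.nabla_leibniz, K.nabla_leibniz,
      K.nabla_phi Y (K.nabla X Z), K.nabla_phi Y X, K.nabla_xi0 h0 Y]
  rw [K.X_gphi X Y Z, K.X_gphi Y X Z, K.X_eta0 h0 X Z, K.X_eta0 h0 Y Z]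
  rw [K.phi_sub, K.phi_sub]
  rw [show ⁅X, Y⁆ = K.nabla X Y - K.nabla Y X from (K.torsion_free X Y).symm]
  simp only [K.phi_sub, K.g_sub_left, K.eta_sub, K.nabla_sub_left]
  have hsk : K.g (K.φ Y) X = -(K.g (K.φ X) Y) := by
    rw [K.gphi_skew0 h0 Y X, K.g_symm Y (K.φ X)]
  rw [hsk]
  module

lemma gphi_diag (h0 : K.ta = 0) (A : 𝒟) : K.g (K.φ A) A = 0 := by
  have h := K.gphi_skew0 h0 A A
  rw [K.g_symm A (K.φ A)] at h
  exact half (by linear_combination h)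

end PhiCurv
section Traces

lemma traceA (h0 : K.ta = 0) (X W : 𝒟) :
    ∑ i, K.g (K.Rm X (K.e i) (K.φ (K.e i))) W
      = -(K.S X (K.φ W)) + (((2 * n + 1 : ℕ) : C) - 2) * K.g (K.φ X) W := by
  have hpt : ∀ i : Fin (2 * n + 1), K.g (K.Rm X (K.e i) (K.φ (K.e i))) W
      = -(K.g (K.Rm X (K.e i) (K.e i)) (K.φ W)) + K.g (K.φ X) W * K.g (K.e i) (K.e i)
        + K.g X (K.e i) * K.g (K.φ W) (K.e i) - K.g (K.φ X) (K.e i) * K.g W (K.e i) := by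
    intro i
    rw [K.Rm_phi h0 X (K.e i) (K.e i)]
    rw [K.g_sub_left, K.g_add_left, K.g_sub_left, K.g_add_left, K.g_smul_left,
      K.g_smul_left, K.g_smul_left, K.g_smul_left]
    have h1 : K.g (K.φ (K.Rm X (K.e i) (K.e i))) W
        = -(K.g (K.Rm X (K.e i) (K.e i)) (K.φ W)) := K.gphi_skew0 h0 _ W
    have h2 : K.g (K.φ (K.e i)) W = -(K.g (K.φ W) (K.e i)) := by
      rw [K.gphi_skew0 h0 (K.e i) W, K.g_symm (K.e i) (K.φ W)]
    have h3 := K.gphi_diag h0 (K.e i)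
    have h4 := K.g_symm (K.e i) W
    rw [h1, h2, h3]
    linear_combination -(K.g (K.φ X) (K.e i)) * h4
  rw [Finset.sum_congr rfl fun i _ => hpt i]
  rw [Finset.sum_sub_distrib, Finset.sum_add_distrib, Finset.sum_add_distrib,
    Finset.sum_neg_distrib, K.Sround X (K.φ W), ← Finset.mul_sum, K.sum_ee]
  have hA : ∑ i, K.g X (K.e i) * K.g (K.φ W) (K.e i) = K.g X (K.φ W) :=
    (K.g_expand X (K.φ W)).symm
  have hB : ∑ i, K.g (K.φ X) (K.e i) * K.g W (K.e i) = K.g (K.φ X) W :=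
    (K.g_expand (K.φ X) W).symm
  rw [hA, hB]
  have hs : K.g (K.φ X) W = -(K.g X (K.φ W)) := K.gphi_skew0 h0 X W
  linear_combination hs

lemma traceC (h0 : K.ta = 0) (W X : 𝒟) :
    ∑ i, K.g (K.Rm (K.e i) W (K.φ (K.e i))) X
      = K.S W (K.φ X) + (2 - ((2 * n + 1 : ℕ) : C)) * K.g (K.φ W) X := by
  have hpt : ∀ i : Fin (2 * n + 1), K.g (K.Rm (K.e i) W (K.φ (K.e i))) X
      = K.g (K.Rm W (K.e i) (K.e i)) (K.φ X) - K.g W (K.e i) * K.g (K.φ X) (K.e i)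
        - K.g (K.e i) (K.e i) * K.g (K.φ W) X + K.g (K.φ W) (K.e i) * K.g X (K.e i) := by
    intro i
    rw [K.Rm_phi h0 (K.e i) W (K.e i)]
    rw [K.g_sub_left, K.g_add_left, K.g_sub_left, K.g_add_left, K.g_smul_left,
      K.g_smul_left, K.g_smul_left, K.g_smul_left]
    have h1 : K.g (K.φ (K.Rm (K.e i) W (K.e i))) X
        = -(K.g (K.Rm (K.e i) W (K.e i)) (K.φ X)) := K.gphi_skew0 h0 _ X
    have h1b : K.g (K.Rm (K.e i) W (K.e i)) (K.φ X)
        = -(K.g (K.Rm W (K.e i) (K.e i)) (K.φ X)) := by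
      rw [K.Rm_skew1 (K.e i) W, K.g_neg_left]
    have h2 : K.g (K.φ (K.e i)) X = -(K.g (K.φ X) (K.e i)) := by
      rw [K.gphi_skew0 h0 (K.e i) X, K.g_symm (K.e i) (K.φ X)]
    have h3 := K.gphi_diag h0 (K.e i)
    have h4 := K.g_symm (K.e i) X
    rw [h1, h1b, h2, h3]
    linear_combination K.g (K.φ W) (K.e i) * h4
  rw [Finset.sum_congr rfl fun i _ => hpt i]
  rw [Finset.sum_add_distrib, Finset.sum_sub_distrib, Finset.sum_sub_distrib,
    K.Sround W (K.φ X)]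
  have hA : ∑ i, K.g W (K.e i) * K.g (K.φ X) (K.e i) = K.g W (K.φ X) :=
    (K.g_expand W (K.φ X)).symm
  have hB : ∑ i, K.g (K.φ W) (K.e i) * K.g X (K.e i) = K.g (K.φ W) X :=
    (K.g_expand (K.φ W) X).symm
  have hC : ∑ i, K.g (K.e i) (K.e i) * K.g (K.φ W) X
      = ((2 * n + 1 : ℕ) : C) * K.g (K.φ W) X := by
    rw [← Finset.sum_mul, K.sum_ee]
  rw [hA, hB, hC]
  have hs : K.g (K.φ W) X = -(K.g W (K.φ X)) := K.gphi_skew0 h0 W X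
  linear_combination -hs

lemma traceB (h0 : K.ta = 0) (X W : 𝒟) :
    ∑ i, K.g (K.Rm (K.φ (K.e i)) X (K.e i)) W
      = K.S W (K.φ X) + (2 - ((2 * n + 1 : ℕ) : C)) * K.g (K.φ W) X := by
  rw [Finset.sum_congr rfl fun i _ => K.Rm_pair (K.φ (K.e i)) X (K.e i) W]
  exact K.traceC h0 W X

lemma omega (h0 : K.ta = 0) (X W : 𝒟) :
    ∑ i, K.g (K.Rm (K.e i) (K.φ (K.e i)) X) W
      = K.S X (K.φ W) - K.S W (K.φ X)
        + (2 * (((2 * n + 1 : ℕ) : C) - 2)) * K.g (K.φ W) X := by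
  have hpt : ∀ i : Fin (2 * n + 1), K.g (K.Rm (K.e i) (K.φ (K.e i)) X) W
      = -(K.g (K.Rm (K.φ (K.e i)) X (K.e i)) W) - K.g (K.Rm X (K.e i) (K.φ (K.e i))) W := by
    intro i
    have h := congrArg (fun V => K.g V W) (K.firstBianchi (K.e i) (K.φ (K.e i)) X)
    simp only [K.g_add_left, K.g_zero_left] at h
    linear_combination h
  rw [Finset.sum_congr rfl fun i _ => hpt i, Finset.sum_sub_distrib, Finset.sum_neg_distrib,
    K.traceB h0 X W, K.traceA h0 X W]
  have hs : K.g (K.φ X) W = -(K.g (K.φ W) X) := by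
    rw [K.gphi_skew0 h0 X W, K.g_symm X (K.φ W)]
  linear_combination -(((2 * n + 1 : ℕ) : C) - 2) * hs

end Traces
section PhiFrame

lemma phiframe (h0 : K.ta = 0) (A B : 𝒟) :
    ∑ i, K.g (K.Rm (K.φ (K.e i)) A B) (K.φ (K.e i))
      = K.S A B - K.η A * K.η B + K.g A B := by
  have hx : ∀ i : Fin (2 * n + 1), K.g (K.Rm (K.φ (K.e i)) A B) (K.φ (K.e i))
      = ∑ j, K.g (K.φ (K.e i)) (K.e j) * K.g (K.Rm (K.e j) A B) (K.φ (K.e i)) := by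
    intro i
    nth_rewrite 1 [K.frame_span (K.φ (K.e i))]
    exact bilin_sum_left (fun U V => K.g (K.Rm U A B) V)
      (fun V => by
        show K.g (K.Rm 0 A B) V = 0
        have hz : (0 : Derivation ℝ C C) = (0 : C) • (0 : Derivation ℝ C C) := by module
        rw [hz, K.Rm_smul1, K.g_smul_left]; ring)
      (fun c U V => by
        show K.g (K.Rm (c • U) A B) V = c * K.g (K.Rm U A B) V
        rw [K.Rm_smul1, K.g_smul_left])
      (fun U U' V => by
        show K.g (K.Rm (U + U') A B) V = K.g (K.Rm U A B) V + K.g (K.Rm U' A B) V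
        rw [K.Rm_add1, K.g_add_left])
      Finset.univ _ _ _
  rw [Finset.sum_congr rfl fun i _ => hx i, Finset.sum_comm]
  have hj : ∀ j : Fin (2 * n + 1),
      (∑ i, K.g (K.φ (K.e i)) (K.e j) * K.g (K.Rm (K.e j) A B) (K.φ (K.e i)))
        = K.g (K.Rm (K.e j) A B) (K.e j)
          - K.η (K.e j) * (K.η A * K.g (K.e j) B - K.η (K.e j) * K.g A B) := by
    intro j
    have hterm : ∀ i : Fin (2 * n + 1),
        K.g (K.φ (K.e i)) (K.e j) * K.g (K.Rm (K.e j) A B) (K.φ (K.e i))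
          = K.g (K.φ (K.e j)) (K.e i) * K.g (K.φ (K.Rm (K.e j) A B)) (K.e i) := by
      intro i
      have f1 : K.g (K.φ (K.e i)) (K.e j) = -(K.g (K.φ (K.e j)) (K.e i)) := by
        rw [K.gphi_skew0 h0 (K.e i) (K.e j), K.g_symm (K.e i) (K.φ (K.e j))]
      have f2 : K.g (K.Rm (K.e j) A B) (K.φ (K.e i))
          = -(K.g (K.φ (K.Rm (K.e j) A B)) (K.e i)) := by
        linear_combination K.gphi_skew0 h0 (K.Rm (K.e j) A B) (K.e i)
      rw [f1, f2]; ring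
    rw [Finset.sum_congr rfl fun i _ => hterm i]
    rw [(K.g_expand (K.φ (K.e j)) (K.φ (K.Rm (K.e j) A B))).symm, K.compat_phi]
    have hRη : K.η (K.Rm (K.e j) A B) = K.η A * K.g (K.e j) B - K.η (K.e j) * K.g A B := by
      rw [K.eta_def, K.eta_Rm h0]
    rw [hRη, K.g_symm (K.e j) (K.Rm (K.e j) A B)]
  rw [Finset.sum_congr rfl fun j _ => hj j, Finset.sum_sub_distrib]
  have h1 : ∑ j, K.g (K.Rm (K.e j) A B) (K.e j) = K.S A B := rfl
  have h2 : ∑ j, K.η (K.e j) * (K.η A * K.g (K.e j) B - K.η (K.e j) * K.g A B)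
      = K.η A * K.η B - K.g A B := by
    have hpt : ∀ j : Fin (2 * n + 1),
        K.η (K.e j) * (K.η A * K.g (K.e j) B - K.η (K.e j) * K.g A B)
          = K.η A * (K.η (K.e j) * K.g B (K.e j))
            - K.g A B * (K.η (K.e j) * K.η (K.e j)) := by
      intro j; rw [K.g_symm (K.e j) B]; ring
    rw [Finset.sum_congr rfl fun j _ => hpt j, Finset.sum_sub_distrib,
      ← Finset.mul_sum, ← Finset.mul_sum, K.sum_eta_gx B, K.sum_eta2]
    ring
  rw [h1, h2]
  ring

lemma Vlemma (h0 : K.ta = 0) (X Y : 𝒟) :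
    ∑ i, K.g (K.Rm (K.φ (K.e i)) (K.φ X) Y) (K.e i)
      = K.S X Y + (((2 * n + 1 : ℕ) : C) - 1) * (K.η X * K.η Y)
        + (((2 * n + 1 : ℕ) : C) - 2) * (K.g X Y - K.η X * K.η Y) := by
  rw [Finset.sum_congr rfl fun i _ => K.Rm_pair (K.φ (K.e i)) (K.φ X) Y (K.e i)]
  rw [K.traceA h0 Y (K.φ X)]
  have h1 : K.S Y (K.φ (K.φ X))
      = K.η X * (((1:C) - ((2*n+1:ℕ):C)) * K.η Y) - K.S Y X := by
    rw [K.phi_phi X]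
    have hx : -X + K.η X • K.ξ = K.η X • K.ξ - X := by module
    rw [hx, K.S_sub2, K.S_smul2, K.S_xi1 h0]
  have h2 : K.g (K.φ Y) (K.φ X) = K.g Y X - K.η Y * K.η X := K.compat_phi Y X
  rw [h1, h2, K.S_symm Y X, K.g_symm Y X]
  ring

lemma S_phiphi (h0 : K.ta = 0) (X Y : 𝒟) :
    K.S (K.φ X) (K.φ Y) = K.S X Y + (((2 * n + 1 : ℕ) : C) - 1) * (K.η X * K.η Y) := by
  have hpf := K.phiframe h0 (K.φ X) (K.φ Y)
  rw [K.eta_phi0 h0 X, K.eta_phi0 h0 Y, K.compat_phi] at hpf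
  have hpt : ∀ i : Fin (2 * n + 1),
      K.g (K.Rm (K.φ (K.e i)) (K.φ X) (K.φ Y)) (K.φ (K.e i))
        = K.g (K.Rm (K.φ (K.e i)) (K.φ X) Y) (K.e i)
          + K.g (K.φ Y) (K.e i) * K.g (K.φ X) (K.e i)
          + (K.η X * K.η Y - K.g X Y) * K.g (K.e i) (K.e i)
          - (K.η X * K.η Y - K.g X Y) * (K.η (K.e i) * K.η (K.e i))
          - K.η Y * (K.η (K.e i) * K.g X (K.e i))
          + (K.η X * K.η Y) * (K.η (K.e i) * K.η (K.e i))
          + K.g Y (K.e i) * K.g X (K.e i)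
          - K.η X * (K.η (K.e i) * K.g Y (K.e i)) := by
    intro i
    rw [K.Rm_phi h0 (K.φ (K.e i)) (K.φ X) Y]
    rw [K.g_sub_left, K.g_add_left, K.g_sub_left, K.g_add_left, K.g_smul_left,
      K.g_smul_left, K.g_smul_left, K.g_smul_left]
    have v1 : K.g (K.φ (K.Rm (K.φ (K.e i)) (K.φ X) Y)) (K.φ (K.e i))
        = K.g (K.Rm (K.φ (K.e i)) (K.φ X) Y) (K.e i) := by
      rw [K.compat_phi]
      have hη : K.η (K.Rm (K.φ (K.e i)) (K.φ X) Y) = 0 := by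
        rw [K.eta_def, K.eta_Rm h0, K.eta_phi0 h0, K.eta_phi0 h0]; ring
      rw [hη]; ring
    have v2a : K.g (K.φ (K.φ (K.e i))) (K.φ (K.e i)) = 0 := by
      rw [K.phi_phi (K.e i)]
      have hx : -(K.e i) + K.η (K.e i) • K.ξ = K.η (K.e i) • K.ξ - K.e i := by module
      rw [hx, K.g_sub_left, K.g_smul_left, K.g_eta' (K.φ (K.e i)), K.eta_phi0 h0,
        K.g_symm (K.e i) (K.φ (K.e i)), K.gphi_diag h0]
      ring
    have f3a : K.g (K.φ (K.φ X)) (K.φ (K.e i)) = K.g (K.φ X) (K.e i) := by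
      rw [K.compat_phi, K.eta_phi0 h0 X]; ring
    have f3b : K.g (K.φ (K.e i)) Y = -(K.g (K.φ Y) (K.e i)) := by
      rw [K.gphi_skew0 h0 (K.e i) Y, K.g_symm (K.e i) (K.φ Y)]
    have f4a : K.g (K.φ (K.φ X)) Y = K.η X * K.η Y - K.g X Y := by
      rw [K.phi_phi X]
      have hx : -X + K.η X • K.ξ = K.η X • K.ξ - X := by module
      rw [hx, K.g_sub_left, K.g_smul_left, K.g_eta' Y]
    have f4b : K.g (K.φ (K.e i)) (K.φ (K.e i))
        = K.g (K.e i) (K.e i) - K.η (K.e i) * K.η (K.e i) := K.compat_phi _ _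
    have f5a : K.g (K.φ (K.φ (K.e i))) Y
        = K.η (K.e i) * K.η Y - K.g (K.e i) Y := by
      rw [K.phi_phi (K.e i)]
      have hx : -(K.e i) + K.η (K.e i) • K.ξ = K.η (K.e i) • K.ξ - K.e i := by module
      rw [hx, K.g_sub_left, K.g_smul_left, K.g_eta' Y]
    have f5b : K.g (K.φ X) (K.φ (K.e i))
        = K.g X (K.e i) - K.η X * K.η (K.e i) := K.compat_phi _ _
    rw [v1, v2a, f3a, f3b, f4a, f4b, f5a, f5b]
    linear_combination (K.g X (K.e i) - K.η X * K.η (K.e i)) * K.g_symm (K.e i) Y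
  rw [Finset.sum_congr rfl fun i _ => hpt i] at hpf
  simp only [Finset.sum_add_distrib, Finset.sum_sub_distrib, ← Finset.mul_sum] at hpf
  rw [K.Vlemma h0 X Y, (K.g_expand (K.φ Y) (K.φ X)).symm, K.sum_ee, K.sum_eta2,
    K.sum_eta_gx X, K.sum_eta_gx Y, (K.g_expand Y X).symm, K.compat_phi Y X] at hpf
  rw [K.g_symm Y X] at hpf
  linear_combination -hpf

lemma S_phi_xi (h0 : K.ta = 0) (X : 𝒟) : K.S (K.φ X) K.ξ = 0 := by
  rw [K.S_xi1 h0, K.eta_phi0 h0]; ring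

lemma S_phi_skew (h0 : K.ta = 0) (X W : 𝒟) :
    K.S X (K.φ W) = -(K.S (K.φ X) W) := by
  have h := K.S_phiphi h0 X (K.φ W)
  rw [K.eta_phi0 h0 W] at h
  have h2 : K.S (K.φ X) (K.φ (K.φ W)) = K.η W * K.S (K.φ X) K.ξ - K.S (K.φ X) W := by
    rw [K.phi_phi W]
    have hx : -W + K.η W • K.ξ = K.η W • K.ξ - W := by module
    rw [hx, K.S_sub2, K.S_smul2]
  rw [h2, K.S_phi_xi h0] at h
  linear_combination -h

lemma Sstar_eq (h0 : K.ta = 0) (X Y : 𝒟) :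
    K.Sstar X Y = K.S X Y + (((2 * n + 1 : ℕ) : C) - 2) * K.g X Y + K.η X * K.η Y := by
  unfold Sstar
  have hsum : ∑ i, K.g (K.Rm X (K.φ Y) (K.φ (K.e i))) (K.e i)
      = (K.S X Y + (((2 * n + 1 : ℕ) : C) - 2) * K.g X Y + K.η X * K.η Y)
        + (K.S X Y + (((2 * n + 1 : ℕ) : C) - 2) * K.g X Y + K.η X * K.η Y) := by
    have hpt : ∀ i : Fin (2 * n + 1), K.g (K.Rm X (K.φ Y) (K.φ (K.e i))) (K.e i)
        = -(K.g (K.Rm (K.e i) (K.φ (K.e i)) X) (K.φ Y)) := by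
      intro i
      rw [K.Rm_pair X (K.φ Y) (K.φ (K.e i)) (K.e i)]
      rw [K.Rm_skew1 (K.φ (K.e i)) (K.e i), K.g_neg_left]
    rw [Finset.sum_congr rfl fun i _ => hpt i, Finset.sum_neg_distrib,
      K.omega h0 X (K.φ Y)]
    have e1 : K.S X (K.φ (K.φ Y))
        = K.η Y * (((1:C) - ((2*n+1:ℕ):C)) * K.η X) - K.S X Y := by
      rw [K.phi_phi Y]
      have hx : -Y + K.η Y • K.ξ = K.η Y • K.ξ - Y := by module
      rw [hx, K.S_sub2, K.S_smul2, K.S_xi1 h0]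
    have e2 : K.S (K.φ Y) (K.φ X) = K.S Y X + (((2*n+1:ℕ):C) - 1) * (K.η Y * K.η X) :=
      K.S_phiphi h0 Y X
    have e3 : K.g (K.φ (K.φ Y)) X = K.η Y * K.η X - K.g Y X := by
      rw [K.phi_phi Y]
      have hx : -Y + K.η Y • K.ξ = K.η Y • K.ξ - Y := by module
      rw [hx, K.g_sub_left, K.g_smul_left, K.g_eta' X]
    rw [e1, e2, e3, K.S_symm Y X, K.g_symm Y X]
    ring
  rw [hsum]
  have h2' : algebraMap ℝ C (2:ℝ)⁻¹ * (2:C) = 1 := by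
    rw [show ((2:C)) = algebraMap ℝ C 2 from (map_ofNat (algebraMap ℝ C) 2).symm, ← map_mul]
    norm_num
  rw [Algebra.smul_def]
  linear_combination (K.S X Y + (((2 * n + 1 : ℕ) : C) - 2) * K.g X Y + K.η X * K.η Y) * h2'

end PhiFrame
section Soliton

lemma frame_der (Y : 𝒟) (c : C) : Y c = ∑ i, K.g Y (K.e i) * (K.e i) c := by
  have h := congrArg (fun D : Derivation ℝ C C => D c) (K.frame_span Y)
  rw [dsum_apply] at h
  rw [h]
  exact Finset.sum_congr rfl fun i _ => by simp


lemma hseq {f l : C} {F : 𝒟} (h0 : K.ta = 0) (hy : K.IsGradAlmostStarRicciSoliton f F l) (X Y : 𝒟) :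
    K.g (K.nabla X F) Y
      = -(K.S X Y) - ((((2*n+1:ℕ):C) - 2) + l) * K.g X Y - K.η X * K.η Y := by
  have h := hy.2 X Y
  rw [K.Sstar_eq h0] at h
  linear_combination h

lemma dc2 {l : C} (X : 𝒟) : X ((((2*n+1:ℕ):C) - 2) + l) = X l := by
  rw [map_add, map_sub, Derivation.map_natCast]
  have : X ((2:C)) = 0 := by
    rw [show ((2:C)) = ((2:ℕ):C) by norm_num, Derivation.map_natCast]
  rw [this]; ring

lemma RmF_scalar {f l : C} {F : 𝒟} (h0 : K.ta = 0) (hy : K.IsGradAlmostStarRicciSoliton f F l) (X Y W : 𝒟) :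
    K.g (K.Rm X Y F) W
      = K.DS Y X W - K.DS X Y W - X l * K.g Y W + Y l * K.g X W
        - K.η Y * K.g X W + K.η X * K.g Y W := by
  have m1 := K.metric_compat X (K.nabla Y F) W
  have m2 := K.metric_compat Y (K.nabla X F) W
  have a1 : X (K.g (K.nabla Y F) W)
      = -(X (K.S Y W)) - (X l * K.g Y W + ((((2*n+1:ℕ):C) - 2) + l) * X (K.g Y W))
        - (X (K.η Y) * K.η W + K.η Y * X (K.η W)) := by
    rw [K.hseq h0 hy Y W, map_sub, map_sub, map_neg, d_mul, d_mul, dc2]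
    ring
  have a2 : Y (K.g (K.nabla X F) W)
      = -(Y (K.S X W)) - (Y l * K.g X W + ((((2*n+1:ℕ):C) - 2) + l) * Y (K.g X W))
        - (Y (K.η X) * K.η W + K.η X * Y (K.η W)) := by
    rw [K.hseq h0 hy X W, map_sub, map_sub, map_neg, d_mul, d_mul, dc2]
    ring
  have r1 := K.hseq h0 hy Y (K.nabla X W)
  have r2 := K.hseq h0 hy X (K.nabla Y W)
  have q3 := K.hseq h0 hy ⁅X, Y⁆ W
  have tS : K.S ⁅X, Y⁆ W = K.S (K.nabla X Y) W - K.S (K.nabla Y X) W := by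
    rw [← K.torsion_free, K.S_sub1]
  have tg : K.g ⁅X, Y⁆ W = K.g (K.nabla X Y) W - K.g (K.nabla Y X) W := by
    rw [← K.torsion_free, K.g_sub_left]
  have tη := K.eta_bracket X Y
  have mcXg := K.metric_compat X Y W
  have mcYg := K.metric_compat Y X W
  have exy := K.X_eta0 h0 X Y
  have exw := K.X_eta0 h0 X W
  have eyx := K.X_eta0 h0 Y X
  have eyw := K.X_eta0 h0 Y W
  unfold Rm DS
  rw [K.g_sub_left, K.g_sub_left]
  linear_combination -m1 + m2 + a1 - a2 - r1 + r2 - q3 + tS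
    + ((((2*n+1:ℕ):C) - 2) + l) * tg + K.η W * tη
    - ((((2*n+1:ℕ):C) - 2) + l) * mcXg + ((((2*n+1:ℕ):C) - 2) + l) * mcYg
    - K.η W * exy + K.η W * eyx - K.η Y * exw + K.η X * eyw
    + K.η W * K.g_symm Y X

lemma DS_xi (h0 : K.ta = 0) (X Y : 𝒟) :
    K.DS X Y K.ξ = ((1:C) - ((2*n+1:ℕ):C)) * K.g X Y - K.S X Y := by
  unfold DS
  have d1 : X (K.S Y K.ξ) = ((1:C) - ((2*n+1:ℕ):C)) * X (K.η Y) := by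
    rw [K.S_xi1 h0 Y, d_mul, dconst]; ring
  rw [d1, K.X_eta0 h0 X Y, K.S_xi1 h0 (K.nabla X Y), K.nabla_xi0 h0 X,
    K.S_sub2, K.S_smul2, K.S_xi1 h0 Y]
  linear_combination -(K.S_symm Y X)

lemma identityI {f l : C} {F : 𝒟} (h0 : K.ta = 0) (hy : K.IsGradAlmostStarRicciSoliton f F l) (X Y : 𝒟) :
    K.η Y * (X f + X l) = K.η X * (Y f + Y l) := by
  have h := K.RmF_scalar h0 hy X Y K.ξ
  rw [K.eta_Rm h0 X Y F, K.DS_xi h0 Y X, K.DS_xi h0 X Y, K.g_eta X, K.g_eta Y] at h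
  have hXF : K.g X F = X f := by rw [K.g_symm]; exact hy.1 X
  have hYF : K.g Y F = Y f := by rw [K.g_symm]; exact hy.1 Y
  rw [hXF, hYF] at h
  linear_combination h + ((1:C) - ((2*n+1:ℕ):C)) * K.g_symm Y X - K.S_symm Y X

lemma identityI2 {f l : C} {F : 𝒟} (h0 : K.ta = 0) (hy : K.IsGradAlmostStarRicciSoliton f F l) (X : 𝒟) :
    X f + X l = K.η X * (K.ξ f + K.ξ l) := by
  have h := K.identityI h0 hy X K.ξ
  rw [K.eta_xi] at h
  linear_combination h

lemma CRxi {f l : C} {F : 𝒟} (h0 : K.ta = 0) (hy : K.IsGradAlmostStarRicciSoliton f F l) :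
    ((1:C) - ((2*n+1:ℕ):C)) * K.ξ f
      = K.ξ K.r - (((1:C) - ((2*n+1:ℕ):C)) * ((2*n+1:ℕ):C) - K.r)
        + (((2*n+1:ℕ):C) - 1) * K.ξ l - (((2*n+1:ℕ):C) - 1) := by
  have hpt : ∀ i : Fin (2 * n + 1), K.g (K.Rm (K.e i) K.ξ F) (K.e i)
      = K.DS K.ξ (K.e i) (K.e i) - K.DS (K.e i) K.ξ (K.e i)
        - (K.e i) l * K.g K.ξ (K.e i) + K.ξ l * K.g (K.e i) (K.e i)
        - K.η K.ξ * K.g (K.e i) (K.e i) + K.η (K.e i) * K.g K.ξ (K.e i) :=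
    fun i => K.RmF_scalar h0 hy (K.e i) K.ξ (K.e i)
  have hsum : K.S K.ξ F = ∑ i, K.g (K.Rm (K.e i) K.ξ F) (K.e i) := rfl
  rw [Finset.sum_congr rfl fun i _ => hpt i] at hsum
  simp only [Finset.sum_add_distrib, Finset.sum_sub_distrib, ← Finset.mul_sum] at hsum
  rw [K.sum_DS_diag K.ξ, K.divS_xi h0, K.sum_ee, K.eta_xi] at hsum
  have h1 : ∑ i, (K.e i) l * K.g K.ξ (K.e i) = K.ξ l := by
    rw [K.frame_der K.ξ l]
    exact Finset.sum_congr rfl fun i _ => by rw [mul_comm]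
  have h2 : ∑ i, K.η (K.e i) * K.g K.ξ (K.e i) = 1 := by
    rw [show (1:C) = ∑ i, K.η (K.e i) * K.η (K.e i) from (K.sum_eta2).symm]
    exact Finset.sum_congr rfl fun i _ => by rw [K.g_eta' (K.e i)]
  rw [h1, h2] at hsum
  have h3 : K.S K.ξ F = ((1:C) - ((2*n+1:ℕ):C)) * K.ξ f := by
    rw [K.S_xi2 h0 F, K.eta_def F, hy.1 K.ξ]
  rw [h3] at hsum
  linear_combination hsum

end Soliton
section Final

lemma Jlemma {f l : C} {F : 𝒟} (h0 : K.ta = 0)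
    (hy : K.IsGradAlmostStarRicciSoliton f F l) (X Y : 𝒟) :
    K.η Y * X (K.ξ f + K.ξ l) = K.η X * Y (K.ξ f + K.ξ l) := by
  have iY := K.identityI2 h0 hy Y
  have iX := K.identityI2 h0 hy X
  have iB := K.identityI2 h0 hy ⁅X, Y⁆
  have dX : X (Y f + Y l) = K.η Y * X (K.ξ f + K.ξ l)
      + (K.ξ f + K.ξ l) * X (K.η Y) := by rw [iY, d_mul]
  have dY : Y (X f + X l) = K.η X * Y (K.ξ f + K.ξ l)
      + (K.ξ f + K.ξ l) * Y (K.η X) := by rw [iX, d_mul]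
  have hb : X (Y f) - Y (X f) + (X (Y l) - Y (X l))
      = K.η ⁅X, Y⁆ * (K.ξ f + K.ξ l) := by
    rw [← bracket_apply, ← bracket_apply]
    linear_combination iB
  have hma1 : X (Y f + Y l) = X (Y f) + X (Y l) := map_add X _ _
  have hma2 : Y (X f + X l) = Y (X f) + Y (X l) := map_add Y _ _
  have hd := K.deta h0 X Y
  linear_combination -dX + dY + hma1 - hma2 + hb - (K.ξ f + K.ξ l) * hd

lemma hsE {f l : C} {F : 𝒟} (h0 : K.ta = 0)
    (hy : K.IsGradAlmostStarRicciSoliton f F l) :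
    (((2*n+1:ℕ):C) - 1) * (K.ξ f + K.ξ l)
      = K.r + ((((2*n+1:ℕ):C) - 1) * ((2*n+1:ℕ):C) + (((2*n+1:ℕ):C) - 1)) := by
  linear_combination -(K.CRxi h0 hy) - K.xi_r h0

lemma hs_r {f l : C} {F : 𝒟} (h0 : K.ta = 0)
    (hy : K.IsGradAlmostStarRicciSoliton f F l) (X : 𝒟) :
    (((2*n+1:ℕ):C) - 1) * X (K.ξ f + K.ξ l) = X K.r := by
  have hc0 : X ((((2*n+1:ℕ):C) - 1) * ((2*n+1:ℕ):C) + (((2*n+1:ℕ):C) - 1)) = 0 := by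
    have hcc : (((2*n+1:ℕ):C) - 1) * ((2*n+1:ℕ):C) + (((2*n+1:ℕ):C) - 1)
        = ((2*n*(2*n+1) + 2*n : ℕ) : C) := by push_cast; ring
    rw [hcc, Derivation.map_natCast]
  have hc1 : X ((((2*n+1:ℕ):C) - 1)) = 0 := by
    rw [map_sub, Derivation.map_natCast, Derivation.map_one_eq_zero]; ring
  have h2 := congrArg (fun c => X c) (K.hsE h0 hy)
  rw [d_mul, hc1] at h2
  rw [show X (K.r + ((((2*n+1:ℕ):C) - 1) * ((2*n+1:ℕ):C) + (((2*n+1:ℕ):C) - 1)))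
      = X K.r + X ((((2*n+1:ℕ):C) - 1) * ((2*n+1:ℕ):C) + (((2*n+1:ℕ):C) - 1))
    from map_add X _ _, hc0] at h2
  linear_combination h2

end Final

end KenmotsuManifold

open KenmotsuManifold in
/-- If the metric of a Kenmotsu manifold of dimension `2n+1` is a
gradient almost `*`-Ricci soliton, then `Dr = -2(r + 2n(2n+1)) ξ`; via the
metric this says `Y(r) = -2(r + 2n(2n+1)) η(Y)` for every vector field `Y`. -/
theorem stmt16 {n : ℕ} {C : Type*} [CommRing C] [Algebra ℝ C]
    (K : KenmotsuManifold n C) (f l : C) (F : Derivation ℝ C C)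
    (h : K.IsGradAlmostStarRicciSoliton f F l) (Y : Derivation ℝ C C) :
    Y K.r = ((-2 : ℝ) • (K.r + algebraMap ℝ C (2 * n * (2 * n + 1)))) * K.η Y := by
  rcases Nat.eq_zero_or_pos n with hn | hn
  · subst hn
    have hr : K.r = 0 := by
      unfold KenmotsuManifold.r KenmotsuManifold.S
      apply Finset.sum_eq_zero; intro i _
      apply Finset.sum_eq_zero; intro j _
      have h1 := j.isLt
      have h2 := i.isLt
      have hji : j = i := Fin.ext (by omega)
      rw [hji, K.Rm_self, K.g_zero_left]
    rw [hr]
    simp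
  · have h0 := K.ta_zero hn.ne'
    have hJ := K.Jlemma h0 h K.ξ Y
    rw [K.eta_xi, one_mul] at hJ
    have h1 := K.hs_r h0 h Y
    have h2 := K.hs_r h0 h K.ξ
    have h3 := K.xi_r h0
    have hcast : algebraMap ℝ C (2 * (n:ℝ) * (2 * (n:ℝ) + 1))
        = (((2*n+1:ℕ):C) - 1) * ((2*n+1:ℕ):C) := by
      rw [show (2*(n:ℝ)*(2*(n:ℝ)+1)) = ((2*n*(2*n+1) : ℕ) : ℝ) by push_cast; ring,
        map_natCast]
      push_cast; ring
    have hsm : ((-2 : ℝ) • (K.r + algebraMap ℝ C (2 * (n:ℝ) * (2 * (n:ℝ) + 1))))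
        = -(2 * (K.r + (((2*n+1:ℕ):C) - 1) * ((2*n+1:ℕ):C))) := by
      rw [Algebra.smul_def, hcast, show algebraMap ℝ C (-2) = -(2:C) by
        rw [map_neg, map_ofNat]]
      ring
    rw [hsm, ← h3]
    linear_combination -h1 - (((2*n+1:ℕ):C) - 1) * hJ + K.η Y * h2
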